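/- If μ > d, then for sufficiently small c > 0 the Diophantine set D(c,μ) ∩ [0,1]^d has positive Lebesgue measure; moreover the measure of [0,1]^d \ D(c,μ) tends to 0 as c → 0. -/

import Mathlib

open MeasureTheory
open scoped ENNReal

/-- The Diophantine set `D(c,μ)`, for the max norm on `ℤ^d`. -/
def DiophantineSet (d : ℕ) (c μ : ℝ) : Set (Fin d → ℝ) :=
  {ω | ∀ (m : Fin d → ℤ) (n : ℤ), (m, n) ≠ 0 →
    c * ‖(fun i => (m i : ℝ))‖ ^ (-μ) ≤ |(∑ i, (m i : ℝ) * ω i) - (n : ℝ)|}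

lemma dioph_aux_line (a b ε : ℝ) (ha : a ≠ 0) :
    volume {x : ℝ | |a * x - b| < ε} ≤ ENNReal.ofReal (2 * ε / |a|) := by
  have ha' : 0 < |a| := abs_pos.2 ha
  have hset : {x : ℝ | |a * x - b| < ε} = Set.Ioo (b/a - ε/|a|) (b/a + ε/|a|) := by
    ext x
    have h : a * x - b = a * (x - b/a) := by field_simp
    simp only [Set.mem_setOf_eq, Set.mem_Ioo, h, abs_mul]
    rw [mul_comm, ← lt_div_iff₀ ha', abs_sub_lt_iff]
    constructor
    · rintro ⟨h1, h2⟩; constructor <;> linarith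
    · rintro ⟨h1, h2⟩; constructor <;> linarith
  rw [hset, Real.volume_Ioo]
  apply ENNReal.ofReal_le_ofReal
  have : (b/a + ε/|a|) - (b/a - ε/|a|) = 2*ε/|a| := by ring
  rw [this]


lemma dioph_aux_int_summable {s : ℝ} (hs : 1 < s) :
    Summable (fun n : ℤ => (1 + |(n : ℝ)|) ^ (-s)) := by
  have hbase := Real.summable_abs_int_rpow hs
  apply Summable.of_norm_bounded_eventually (g := fun n : ℤ => |(n : ℝ)| ^ (-s)) hbase
  have : {n : ℤ | ¬ ‖(1 + |(n:ℝ)|) ^ (-s)‖ ≤ |(n:ℝ)| ^ (-s)} ⊆ {0} := by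
    intro n hn
    simp only [Set.mem_setOf_eq, not_le] at hn
    by_contra h0
    have hn0 : (0:ℝ) < |(n:ℝ)| := by
      simp only [Set.mem_singleton_iff] at h0
      have : (n:ℝ) ≠ 0 := by exact_mod_cast h0
      exact abs_pos.2 this
    have hle : |(n:ℝ)| ≤ 1 + |(n:ℝ)| := by linarith
    have := Real.rpow_le_rpow_of_nonpos hn0 hle (neg_nonpos.2 (by linarith : (0:ℝ) ≤ s))
    have hnorm : ‖(1 + |(n:ℝ)|) ^ (-s)‖ = (1 + |(n:ℝ)|) ^ (-s) := by
      rw [Real.norm_eq_abs, abs_of_nonneg (Real.rpow_nonneg (by linarith) _)]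
    rw [hnorm] at hn
    linarith
  exact Filter.eventually_cofinite.2 (Set.Finite.subset (Set.finite_singleton 0) this)

lemma dioph_aux_pi_summable {d : ℕ} {g : ℤ → ℝ} (hg : Summable g) (hg0 : ∀ n, 0 ≤ g n) :
    Summable (fun m : Fin d → ℤ => ∏ i, g (m i)) := by
  induction d with
  | zero => exact Summable.of_finite
  | succ n ih =>
    rw [← (Fin.consEquiv (fun _ : Fin (n+1) => ℤ)).summable_iff]
    have h := hg.mul_of_nonneg ih hg0 (fun m => Finset.prod_nonneg fun i _ => hg0 _)
    apply h.congr
    rintro ⟨x, y⟩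
    simp only [Function.comp, Fin.consEquiv_apply]
    rw [Fin.prod_univ_succ]
    simp


lemma dioph_norm_ge_one {d : ℕ} {m : Fin d → ℤ} (hm : m ≠ 0) :
    1 ≤ ‖(fun i => (m i : ℝ))‖ := by
  obtain ⟨i, hi⟩ : ∃ i, m i ≠ 0 := by
    by_contra h; push_neg at h; exact hm (funext h)
  set v : Fin d → ℝ := fun i => (m i : ℝ) with hv
  have h1 : (1:ℝ) ≤ |(m i : ℝ)| := by
    have : (1:ℤ) ≤ |m i| := Int.one_le_abs hi
    exact_mod_cast (by exact_mod_cast this : (1:ℝ) ≤ |(m i:ℤ)|)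
  calc (1:ℝ) ≤ |(m i : ℝ)| := h1
    _ = ‖v i‖ := by simp [hv, Real.norm_eq_abs]
    _ ≤ ‖v‖ := norm_le_pi_norm v i

lemma dioph_summable (d : ℕ) (μ : ℝ) (hμ : (d : ℝ) < μ) :
    Summable (fun m : Fin d → ℤ => ‖(fun i => (m i : ℝ))‖ ^ (-μ)) := by
  rcases Nat.eq_zero_or_pos d with hd | hd
  · subst hd; exact Summable.of_finite
  have hd' : (0:ℝ) < d := by exact_mod_cast hd
  have hμ0 : 0 < μ := lt_trans hd' hμ
  set s : ℝ := μ / d with hs_def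
  have hs : 1 < s := (one_lt_div hd').2 hμ
  set g : ℤ → ℝ := fun n => (1 + |(n : ℝ)|) ^ (-s) with hg_def
  have hg0 : ∀ n, 0 ≤ g n := fun n => Real.rpow_nonneg (by positivity) _
  have hG : Summable (fun m : Fin d → ℤ => (2:ℝ) ^ μ * ∏ i, g (m i)) :=
    (dioph_aux_pi_summable (dioph_aux_int_summable hs) hg0).mul_left _
  apply Summable.of_nonneg_of_le (fun m => Real.rpow_nonneg (norm_nonneg _) _) _ hG
  intro m
  by_cases hm : m = 0
  · subst hm
    have h0 : ‖(fun i => ((0 : Fin d → ℤ) i : ℝ))‖ = 0 := by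
      have : (fun i => ((0 : Fin d → ℤ) i : ℝ)) = (0 : Fin d → ℝ) := by
        funext i; simp
      rw [this, norm_zero]
    rw [h0, Real.zero_rpow (by linarith : -μ ≠ 0)]
    positivity
  · set R := ‖(fun i => (m i : ℝ))‖ with hR_def
    have hR1 : 1 ≤ R := dioph_norm_ge_one hm
    have hRpos : 0 < R := lt_of_lt_of_le one_pos hR1
    have hfac : ∀ i, 1 + |(m i : ℝ)| ≤ 2 * R := by
      intro i
      have : |(m i : ℝ)| ≤ R := by
        calc |(m i : ℝ)| = ‖(fun j => (m j : ℝ) : Fin d → ℝ) i‖ := by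
              simp [Real.norm_eq_abs]
          _ ≤ R := norm_le_pi_norm (fun j => (m j : ℝ) : Fin d → ℝ) i
      linarith
    have hprod_le : ∏ i, (1 + |(m i : ℝ)|) ≤ (2*R) ^ d := by
      calc ∏ i, (1 + |(m i : ℝ)|) ≤ ∏ _i : Fin d, (2*R) :=
            Finset.prod_le_prod (fun i _ => by positivity) (fun i _ => hfac i)
        _ = (2*R) ^ d := by simp
    have hprodpos : 0 < ∏ i, (1 + |(m i : ℝ)|) :=
      Finset.prod_pos fun i _ => by positivity
    have key : ((2*R) ^ d : ℝ) ^ (-s) ≤ ∏ i, g (m i) := by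
      show ((2*R) ^ d : ℝ) ^ (-s) ≤ ∏ i, (1 + |(m i : ℝ)|) ^ (-s)
      rw [Real.finset_prod_rpow _ _ (fun i _ => by positivity) (-s)]
      exact Real.rpow_le_rpow_of_nonpos hprodpos hprod_le (neg_nonpos.2 (by linarith))
    have heq : ((2*R) ^ d : ℝ) ^ (-s) = (2:ℝ)^(-μ) * R ^ (-μ) := by
      rw [← Real.rpow_natCast (2*R) d, ← Real.rpow_mul (by positivity)]
      have : (d : ℝ) * (-s) = -μ := by
        rw [hs_def, mul_neg, mul_div_assoc', mul_div_cancel_left₀ μ (ne_of_gt hd')]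
      rw [this, Real.mul_rpow (by norm_num) (le_of_lt hRpos)]
    calc R ^ (-μ) = (2:ℝ)^μ * ((2:ℝ)^(-μ) * R ^ (-μ)) := by
          rw [← mul_assoc, ← Real.rpow_add (by norm_num : (0:ℝ) < 2)]
          simp
      _ ≤ (2:ℝ)^μ * ∏ i, g (m i) := by
          apply mul_le_mul_of_nonneg_left _ (Real.rpow_nonneg (by norm_num) _)
          rw [← heq]; exact key


lemma dioph_box_vol (k : ℕ) : volume (Set.Icc (0 : Fin k → ℝ) 1) = 1 := by
  rw [Real.volume_Icc_pi]
  simp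

lemma dioph_slab_vol {d : ℕ} (m : Fin d → ℤ) (hm : m ≠ 0) (b ε : ℝ) :
    volume (Set.Icc (0 : Fin d → ℝ) 1 ∩ {ω | |(∑ i, (m i : ℝ) * ω i) - b| < ε})
      ≤ ENNReal.ofReal (2 * ε / ‖(fun i => (m i : ℝ))‖) := by
  cases d with
  | zero => exact absurd (Subsingleton.elim m 0) hm
  | succ k =>
  obtain ⟨i₀, -, hmax⟩ := Finset.exists_max_image Finset.univ (fun i => |m i|)
    ⟨0, Finset.mem_univ 0⟩
  obtain ⟨j, hj⟩ : ∃ j, m j ≠ 0 := by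
    by_contra h; push_neg at h; exact hm (funext h)
  have hmi0 : m i₀ ≠ 0 := by
    intro h
    have := hmax j (Finset.mem_univ j)
    rw [h, abs_zero] at this
    exact hj (abs_eq_zero.1 (le_antisymm this (abs_nonneg _)))
  have ha : ((m i₀ : ℝ)) ≠ 0 := Int.cast_ne_zero.2 hmi0
  have hnorm : ‖(fun i => (m i : ℝ) : Fin (k+1) → ℝ)‖ = |(m i₀ : ℝ)| := by
    apply le_antisymm
    · rw [pi_norm_le_iff_of_nonneg (abs_nonneg _)]
      intro i
      rw [Real.norm_eq_abs]
      exact_mod_cast hmax i (Finset.mem_univ i)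
    · have := norm_le_pi_norm (fun i => (m i : ℝ) : Fin (k+1) → ℝ) i₀
      rwa [Real.norm_eq_abs] at this
  set S : Set (Fin (k+1) → ℝ) :=
    Set.Icc (0 : Fin (k+1) → ℝ) 1 ∩ {ω | |(∑ i, (m i : ℝ) * ω i) - b| < ε} with hS_def
  have hScont : Continuous (fun ω : Fin (k+1) → ℝ => |(∑ i, (m i : ℝ) * ω i) - b|) := by
    fun_prop
  have hSmeas : MeasurableSet S :=
    measurableSet_Icc.inter (measurableSet_lt hScont.measurable measurable_const)
  set e := MeasurableEquiv.piFinSuccAbove (fun _ : Fin (k+1) => ℝ) i₀ with he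
  have MP := MeasureTheory.volume_preserving_piFinSuccAbove (fun _ : Fin (k+1) => ℝ) i₀
  have hT : MeasurableSet (e.symm ⁻¹' S) := e.symm.measurable hSmeas
  have hvol : volume S = volume (e.symm ⁻¹' S) := ((MP.symm e).measure_preimage
    hSmeas.nullMeasurableSet).symm
  rw [hvol, Measure.volume_eq_prod, Measure.prod_apply_symm hT]
  have hslice : ∀ y : Fin k → ℝ, volume ((fun x => (x, y)) ⁻¹' (e.symm ⁻¹' S)) ≤
      Set.indicator (Set.Icc (0 : Fin k → ℝ) 1)
        (fun _ => ENNReal.ofReal (2 * ε / |(m i₀ : ℝ)|)) y := by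
    intro y
    have hmem : ∀ x : ℝ, x ∈ (fun x => (x, y)) ⁻¹' (e.symm ⁻¹' S) ↔
        i₀.insertNth x y ∈ S := by
      intro x
      simp only [Set.mem_preimage, he, MeasurableEquiv.piFinSuccAbove_symm_apply,
        Fin.insertNthEquiv_apply, Fin.insertNthEquiv, Equiv.coe_fn_mk]
    by_cases hy : y ∈ Set.Icc (0 : Fin k → ℝ) 1
    · rw [Set.indicator_of_mem hy]
      refine le_trans (measure_mono ?_)
        (dioph_aux_line (m i₀ : ℝ) (b - ∑ j, (m (i₀.succAbove j) : ℝ) * y j) ε ha)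
      intro x hx
      have hx' : i₀.insertNth x y ∈ S := (hmem x).1 hx
      set w : Fin (k+1) → ℝ := i₀.insertNth x y with hw
      obtain ⟨-, hlt⟩ := hx'
      have hsum : ∑ i, (m i : ℝ) * w i
          = (m i₀ : ℝ) * x + ∑ j, (m (i₀.succAbove j) : ℝ) * y j := by
        rw [Fin.sum_univ_succAbove (fun i => (m i : ℝ) * w i) i₀]
        simp [hw]
      show |(m i₀ : ℝ) * x - (b - ∑ j, (m (i₀.succAbove j) : ℝ) * y j)| < ε
      have heq : (m i₀ : ℝ) * x - (b - ∑ j, (m (i₀.succAbove j) : ℝ) * y j)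
          = (∑ i, (m i : ℝ) * w i) - b := by
        rw [hsum]; ring
      rw [heq]
      exact hlt
    · rw [Set.indicator_of_notMem hy]
      rw [nonpos_iff_eq_zero]
      apply measure_mono_null _ (measure_empty (μ := (volume : Measure ℝ)))
      intro x hx
      have hx' : i₀.insertNth x y ∈ S := (hmem x).1 hx
      obtain ⟨hIcc, -⟩ := hx'
      exact hy (Fin.insertNth_mem_Icc.1 hIcc).2
  calc ∫⁻ y, volume ((fun x => (x, y)) ⁻¹' (e.symm ⁻¹' S)) ∂volume
      ≤ ∫⁻ y, Set.indicator (Set.Icc (0 : Fin k → ℝ) 1)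
          (fun _ => ENNReal.ofReal (2 * ε / |(m i₀ : ℝ)|)) y ∂volume :=
        lintegral_mono hslice
    _ = ENNReal.ofReal (2 * ε / |(m i₀ : ℝ)|) * volume (Set.Icc (0 : Fin k → ℝ) 1) := by
        rw [lintegral_indicator_const measurableSet_Icc]
    _ = ENNReal.ofReal (2 * ε / ‖(fun i => (m i : ℝ) : Fin (k+1) → ℝ)‖) := by
        rw [dioph_box_vol, mul_one, hnorm]


lemma dioph_union_vol {d : ℕ} (μ c : ℝ) (hμ0 : 0 < μ) (hc : 0 < c) (hc1 : c ≤ 1)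
    (m : Fin d → ℤ) :
    volume (⋃ n : ℤ, Set.Icc (0 : Fin d → ℝ) 1 ∩
      {ω | |(∑ i, (m i : ℝ) * ω i) - (n : ℝ)| < c * ‖(fun i => (m i : ℝ))‖ ^ (-μ)})
    ≤ ENNReal.ofReal ((4 * d + 10) * c * ‖(fun i => (m i : ℝ))‖ ^ (-μ)) := by
  by_cases hm : m = 0
  · subst hm
    have hnorm : ‖(fun i => ((0 : Fin d → ℤ) i : ℝ))‖ = 0 := by
      have : (fun i => (((0 : Fin d → ℤ)) i : ℝ)) = (0 : Fin d → ℝ) := by funext i; simp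
      rw [this, norm_zero]
    have h0 : volume (⋃ n : ℤ, Set.Icc (0 : Fin d → ℝ) 1 ∩
        {ω | |(∑ i, (((0 : Fin d → ℤ)) i : ℝ) * ω i) - (n : ℝ)| < c *
          ‖(fun i => (((0 : Fin d → ℤ)) i : ℝ))‖ ^ (-μ)}) = 0 := by
      apply measure_mono_null _ (measure_empty (μ := (volume : Measure (Fin d → ℝ))))
      intro ω hω
      simp only [Set.mem_iUnion] at hω
      obtain ⟨n, -, hlt⟩ := hω
      simp only [Set.mem_setOf_eq, hnorm] at hlt
      rw [Real.zero_rpow (by linarith : -μ ≠ 0), mul_zero] at hlt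
      exact absurd hlt (not_lt.2 (abs_nonneg _))
    rw [h0]
    exact zero_le
  · set v : Fin d → ℝ := fun i => (m i : ℝ) with hv
    set R : ℝ := ‖v‖ with hR
    have hR1 : 1 ≤ R := dioph_norm_ge_one hm
    have hRpos : 0 < R := lt_of_lt_of_le one_pos hR1
    set ε : ℝ := c * R ^ (-μ) with hε
    have hεpos : 0 ≤ ε := by positivity
    have hεle : ε ≤ 1 := by
      have h1 : R ^ (-μ) ≤ 1 :=
        Real.rpow_le_one_of_one_le_of_nonpos hR1 (neg_nonpos.2 hμ0.le)
      have h2 : 0 ≤ R ^ (-μ) := Real.rpow_nonneg hRpos.le _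
      nlinarith
    set N : ℤ := ⌈(d : ℝ) * R⌉ + 1 with hN
    have hdR0 : (0:ℝ) ≤ (d : ℝ) * R := by positivity
    have hN0 : 0 ≤ N := by
      have := Int.ceil_nonneg hdR0
      omega
    set A : ℤ → Set (Fin d → ℝ) := fun n => Set.Icc (0 : Fin d → ℝ) 1 ∩
      {ω | |(∑ i, (m i : ℝ) * ω i) - (n : ℝ)| < ε} with hA
    have hsub : (⋃ n : ℤ, A n) ⊆ ⋃ n ∈ Finset.Icc (-N) N, A n := by
      intro ω hω
      simp only [Set.mem_iUnion] at hω ⊢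
      obtain ⟨n, hn⟩ := hω
      refine ⟨n, ?_, hn⟩
      obtain ⟨hbox, hlt⟩ := hn
      simp only [Set.mem_setOf_eq] at hlt
      have hsum : |∑ i, (m i : ℝ) * ω i| ≤ (d : ℝ) * R := by
        calc |∑ i, (m i : ℝ) * ω i| ≤ ∑ i, |(m i : ℝ) * ω i| :=
              Finset.abs_sum_le_sum_abs _ _
          _ ≤ ∑ _i : Fin d, R := by
              apply Finset.sum_le_sum
              intro i _
              rw [abs_mul]
              have h1 : |(m i : ℝ)| ≤ R := by
                have := norm_le_pi_norm v i
                rwa [hv, Real.norm_eq_abs] at this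
              have h2 : |ω i| ≤ 1 := by
                have hb1 := hbox.1 i
                have hb2 := hbox.2 i
                simp only [Pi.zero_apply, Pi.one_apply] at hb1 hb2
                rw [abs_le]
                exact ⟨by linarith, hb2⟩
              nlinarith [abs_nonneg (ω i), abs_nonneg ((m i : ℝ))]
          _ = (d : ℝ) * R := by simp [mul_comm]
      have habs : |(n : ℝ)| ≤ (d : ℝ) * R + 1 := by
        have h3 : |(n : ℝ)| ≤ |(∑ i, (m i : ℝ) * ω i) - (n : ℝ)| +
            |∑ i, (m i : ℝ) * ω i| := by
          have := abs_sub ((∑ i, (m i : ℝ) * ω i) - (n : ℝ)) (∑ i, (m i : ℝ) * ω i)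
          simpa using this
        linarith
      have hNcast : ((d : ℝ) * R + 1) ≤ (N : ℝ) := by
        have := Int.le_ceil ((d : ℝ) * R)
        push_cast [hN]
        linarith
      have h4 : ((|n| : ℤ) : ℝ) ≤ (N : ℝ) := by
        rw [Int.cast_abs]; exact le_trans habs hNcast
      have habs' : |n| ≤ N := by exact_mod_cast h4
      simp only [Finset.mem_Icc]
      exact abs_le.mp habs'
    calc volume (⋃ n : ℤ, A n) ≤ volume (⋃ n ∈ Finset.Icc (-N) N, A n) :=
          measure_mono hsub
      _ ≤ ∑ n ∈ Finset.Icc (-N) N, volume (A n) := measure_biUnion_finset_le _ _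
      _ ≤ ∑ n ∈ Finset.Icc (-N) N, ENNReal.ofReal (2 * ε / R) :=
          Finset.sum_le_sum fun n _ => dioph_slab_vol m hm (n : ℝ) ε
      _ = ((Finset.Icc (-N) N).card : ℝ≥0∞) * ENNReal.ofReal (2 * ε / R) := by
          rw [Finset.sum_const, nsmul_eq_mul]
      _ ≤ ENNReal.ofReal ((4 * d + 10) * c * R ^ (-μ)) := by
          set K : ℕ := (Finset.Icc (-N) N).card with hK
          have hKval : (K : ℤ) = 2 * N + 1 := by
            rw [hK, Int.card_Icc]
            omega
          have hKR : (K : ℝ) ≤ (2 * d + 5) * R := by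
            have hceil : ((⌈(d : ℝ) * R⌉ : ℝ)) ≤ (d : ℝ) * R + 1 :=
              le_of_lt (Int.ceil_lt_add_one _)
            have hNR : (N : ℝ) ≤ (d : ℝ) * R + 2 := by
              push_cast [hN]; linarith
            have hKcast : (K : ℝ) = 2 * (N : ℝ) + 1 := by exact_mod_cast hKval
            have h2R : (2:ℝ) ≤ 2 * R := by linarith
            rw [hKcast]
            nlinarith [Nat.cast_nonneg (α := ℝ) d]
          rw [← ENNReal.ofReal_natCast K, ← ENNReal.ofReal_mul (Nat.cast_nonneg K)]
          apply ENNReal.ofReal_le_ofReal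
          have hfrac : 0 ≤ 2 * ε / R := by positivity
          have hmain : (K : ℝ) * (2 * ε / R) ≤ ((2 * d + 5) * R) * (2 * ε / R) :=
            mul_le_mul_of_nonneg_right hKR hfrac
          have hcalc : ((2 * d + 5) * R) * (2 * ε / R) = (4 * d + 10) * ε := by
            field_simp
            ring
          rw [hcalc] at hmain
          calc (K : ℝ) * (2 * ε / R) ≤ (4 * d + 10) * ε := hmain
            _ = (4 * d + 10) * c * R ^ (-μ) := by rw [hε]; ring



/-- If `μ > d`, then for all sufficiently small `c > 0` the set `D(c,μ) ∩ [0,1]^d`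
has positive Lebesgue measure, and the measure of `[0,1]^d \ D(c,μ)` tends to `0`
as `c → 0⁺`. -/
theorem diophantine_set_positive_measure (d : ℕ) (μ : ℝ) (hμ : (d : ℝ) < μ) :
    (∃ c₀ > 0, ∀ c : ℝ, 0 < c → c < c₀ →
      0 < volume (DiophantineSet d c μ ∩ Set.Icc (0 : Fin d → ℝ) 1)) ∧
    Filter.Tendsto (fun c : ℝ =>
        volume (Set.Icc (0 : Fin d → ℝ) 1 \ DiophantineSet d c μ))
      (nhdsWithin 0 (Set.Ioi 0)) (nhds 0) := by
  have hμ0 : 0 < μ := lt_of_le_of_lt (Nat.cast_nonneg d) hμ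
  have hsummable := dioph_summable d μ hμ
  set S : ℝ := ∑' m : Fin d → ℤ, ‖(fun i => (m i : ℝ))‖ ^ (-μ) with hS
  have hS0 : 0 ≤ S := tsum_nonneg fun m => Real.rpow_nonneg (norm_nonneg _) _
  set K : ℝ := (4 * d + 10) * S with hK
  have hK0 : 0 ≤ K := by positivity
  have key : ∀ c : ℝ, 0 < c → c ≤ 1 →
      volume (Set.Icc (0 : Fin d → ℝ) 1 \ DiophantineSet d c μ)
        ≤ ENNReal.ofReal (K * c) := by
    intro c hc hc1
    have hsub : Set.Icc (0 : Fin d → ℝ) 1 \ DiophantineSet d c μ ⊆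
        ⋃ m : Fin d → ℤ, ⋃ n : ℤ, Set.Icc (0 : Fin d → ℝ) 1 ∩
          {ω | |(∑ i, (m i : ℝ) * ω i) - (n : ℝ)| <
            c * ‖(fun i => (m i : ℝ))‖ ^ (-μ)} := by
      rintro ω ⟨hbox, hnot⟩
      rw [DiophantineSet] at hnot
      simp only [Set.mem_setOf_eq, not_forall] at hnot
      obtain ⟨m, n, _, hlt⟩ := hnot
      rw [not_le] at hlt
      exact Set.mem_iUnion.2 ⟨m, Set.mem_iUnion.2 ⟨n, hbox, hlt⟩⟩
    calc volume (Set.Icc (0 : Fin d → ℝ) 1 \ DiophantineSet d c μ)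
        ≤ volume (⋃ m : Fin d → ℤ, ⋃ n : ℤ, Set.Icc (0 : Fin d → ℝ) 1 ∩
          {ω | |(∑ i, (m i : ℝ) * ω i) - (n : ℝ)| <
            c * ‖(fun i => (m i : ℝ))‖ ^ (-μ)}) := measure_mono hsub
      _ ≤ ∑' m : Fin d → ℤ, volume (⋃ n : ℤ, Set.Icc (0 : Fin d → ℝ) 1 ∩
          {ω | |(∑ i, (m i : ℝ) * ω i) - (n : ℝ)| <
            c * ‖(fun i => (m i : ℝ))‖ ^ (-μ)}) := measure_iUnion_le _
      _ ≤ ∑' m : Fin d → ℤ, ENNReal.ofReal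
            ((4 * d + 10) * c * ‖(fun i => (m i : ℝ))‖ ^ (-μ)) :=
          ENNReal.tsum_le_tsum fun m => dioph_union_vol μ c hμ0 hc hc1 m
      _ = ENNReal.ofReal (K * c) := by
          have hterm : ∀ m : Fin d → ℤ,
              (4 * (d:ℝ) + 10) * c * ‖(fun i => (m i : ℝ))‖ ^ (-μ)
                = ((4 * (d:ℝ) + 10) * c) * (‖(fun i => (m i : ℝ))‖ ^ (-μ)) := by
            intro m; ring
          have hsum2 : Summable (fun m : Fin d → ℤ =>
              ((4 * (d:ℝ) + 10) * c) * (‖(fun i => (m i : ℝ))‖ ^ (-μ))) :=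
            hsummable.mul_left _
          rw [← ENNReal.ofReal_tsum_of_nonneg (fun m => by positivity)
            (hsum2.congr fun m => (hterm m).symm)]
          congr 1
          calc ∑' m : Fin d → ℤ, (4 * (d:ℝ) + 10) * c * ‖(fun i => (m i : ℝ))‖ ^ (-μ)
              = ∑' m : Fin d → ℤ,
                  ((4 * (d:ℝ) + 10) * c) * (‖(fun i => (m i : ℝ))‖ ^ (-μ)) := by
                exact tsum_congr hterm
            _ = ((4 * (d:ℝ) + 10) * c) * S := tsum_mul_left
            _ = K * c := by rw [hK]; ring
  constructor
  · refine ⟨1 / (K + 1), by positivity, ?_⟩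
    intro c hc hcc0
    have hc0le : 1 / (K + 1) ≤ 1 := by
      rw [div_le_one (by linarith)]; linarith
    have hc1 : c ≤ 1 := le_trans hcc0.le hc0le
    have hb := key c hc hc1
    have hKc1 : K * c < 1 := by
      have h1 : K * c ≤ K * (1 / (K + 1)) :=
        mul_le_mul_of_nonneg_left hcc0.le hK0
      have h2 : K * (1 / (K + 1)) < 1 := by
        rw [mul_one_div, div_lt_one (by linarith)]; linarith
      linarith
    have hlt1 : ENNReal.ofReal (K * c) < 1 := by
      rw [← ENNReal.ofReal_one]
      exact ENNReal.ofReal_lt_ofReal_iff_of_nonneg (by positivity) |>.2 hKc1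
    by_contra hzero
    push_neg at hzero
    have h0 : volume (DiophantineSet d c μ ∩ Set.Icc (0 : Fin d → ℝ) 1) = 0 :=
      le_antisymm hzero zero_le
    have hcover : (Set.Icc (0 : Fin d → ℝ) 1 : Set (Fin d → ℝ)) ⊆
        (DiophantineSet d c μ ∩ Set.Icc (0 : Fin d → ℝ) 1) ∪
          (Set.Icc (0 : Fin d → ℝ) 1 \ DiophantineSet d c μ) := by
      intro x hx
      by_cases hxd : x ∈ DiophantineSet d c μ
      · exact Or.inl ⟨hxd, hx⟩
      · exact Or.inr ⟨hx, hxd⟩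
    have h1 : (1 : ℝ≥0∞) ≤ volume (Set.Icc (0 : Fin d → ℝ) 1 \ DiophantineSet d c μ) := by
      calc (1 : ℝ≥0∞) = volume (Set.Icc (0 : Fin d → ℝ) 1) := (dioph_box_vol d).symm
        _ ≤ volume ((DiophantineSet d c μ ∩ Set.Icc (0 : Fin d → ℝ) 1) ∪
              (Set.Icc (0 : Fin d → ℝ) 1 \ DiophantineSet d c μ)) := measure_mono hcover
        _ ≤ volume (DiophantineSet d c μ ∩ Set.Icc (0 : Fin d → ℝ) 1) +
              volume (Set.Icc (0 : Fin d → ℝ) 1 \ DiophantineSet d c μ) := measure_union_le _ _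
        _ = volume (Set.Icc (0 : Fin d → ℝ) 1 \ DiophantineSet d c μ) := by
              rw [h0, zero_add]
    exact absurd (lt_of_le_of_lt (le_trans h1 hb) hlt1) (lt_irrefl _)
  · have hev : ∀ᶠ c in nhdsWithin (0:ℝ) (Set.Ioi 0),
        volume (Set.Icc (0 : Fin d → ℝ) 1 \ DiophantineSet d c μ)
          ≤ ENNReal.ofReal (K * c) := by
      filter_upwards [Ioo_mem_nhdsGT_of_mem
        (⟨le_refl (0:ℝ), zero_lt_one⟩ : (0:ℝ) ∈ Set.Ico (0:ℝ) 1)] with c hc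
      exact key c hc.1 hc.2.le
    have h2 : Filter.Tendsto (fun c : ℝ => ENNReal.ofReal (K * c))
        (nhdsWithin 0 (Set.Ioi 0)) (nhds 0) := by
      have ht : Filter.Tendsto (fun c : ℝ => K * c) (nhds 0) (nhds 0) := by
        have hcont : Continuous fun c : ℝ => K * c := continuous_const.mul continuous_id
        simpa using hcont.tendsto 0
      have h3 := (ENNReal.continuous_ofReal.tendsto 0).comp
        (ht.mono_left (nhdsWithin_le_nhds (s := Set.Ioi 0)))
      simpa [Function.comp_def] using h3
    exact tendsto_of_tendsto_of_tendsto_of_le_of_le' tendsto_const_nhds h2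
      (Filter.Eventually.of_forall fun c => zero_le) hev
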